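/- Let G* = K_δ ∨ (K_{n-2δ+1} ∪ (δ-1)K₁) where δ ≥ 2 and n ≥ 8δ - 7 are integers. Then the Wiener index satisfies 2W(G*) = n² + (2δ - 3)n - 3δ² + 3δ, and consequently 2W(G*)/n ≥ n + δ - 3. -/

import Mathlib

/-!
In a join `G ∨ H` of graphs with non-empty sides, two distinct non-adjacent vertices on the same
side have a common neighbour on the other side, so all distances are 0, 1 or 2. The sum of
distances then only counts adjacent and non-adjacent pairs, and splits additively over the blocks
of the join and of the disjoint union; for complete and empty blocks it is `k (k - 1)` and
`2 k (k - 1)`.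
-/

/-- The join of two simple graphs: all edges within each part, plus all cross edges. -/
def gJoin {α β : Type*} (G : SimpleGraph α) (H : SimpleGraph β) : SimpleGraph (α ⊕ β) where
  Adj u v := match u, v with
    | Sum.inl a, Sum.inl b => G.Adj a b
    | Sum.inr a, Sum.inr b => H.Adj a b
    | Sum.inl _, Sum.inr _ => True
    | Sum.inr _, Sum.inl _ => True
  symm := by refine ⟨?_⟩; rintro (a | a) (b | b) h
             · exact G.adj_symm h
             · trivial
             · trivial
             · exact H.adj_symm h
  loopless := by refine ⟨?_⟩; rintro (a | a) h
                 · exact G.loopless.irrefl a h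
                 · exact H.loopless.irrefl a h

/-- The disjoint union of two simple graphs. -/
def gSum {α β : Type*} (G : SimpleGraph α) (H : SimpleGraph β) : SimpleGraph (α ⊕ β) where
  Adj u v := match u, v with
    | Sum.inl a, Sum.inl b => G.Adj a b
    | Sum.inr a, Sum.inr b => H.Adj a b
    | _, _ => False
  symm := by refine ⟨?_⟩; rintro (a | a) (b | b) h
             · exact G.adj_symm h
             · exact h.elim
             · exact h.elim
             · exact H.adj_symm h
  loopless := by refine ⟨?_⟩; rintro (a | a) h
                 · exact G.loopless.irrefl a h
                 · exact H.loopless.irrefl a h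

/-- The graph `K_δ ∨ (K_{n-2δ+1} ∪ (δ-1)K₁)`. -/
def Gstar (n δ : ℕ) :
    SimpleGraph (Fin δ ⊕ (Fin (n - 2 * δ + 1) ⊕ Fin (δ - 1))) :=
  gJoin (⊤ : SimpleGraph (Fin δ))
    (gSum (⊤ : SimpleGraph (Fin (n - 2 * δ + 1))) (⊥ : SimpleGraph (Fin (δ - 1))))

/-- The signless Laplacian matrix `Q(G) = D(G) + A(G)` over ℝ. -/
noncomputable def qMatrix {V : Type*} [Fintype V] (G : SimpleGraph V) : Matrix V V ℝ := by
  classical exact Matrix.diagonal (fun v => (G.degree v : ℝ)) + G.adjMatrix ℝ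

/-- The distance matrix of a graph over ℝ. -/
noncomputable def dMatrix {V : Type*} [Fintype V] (G : SimpleGraph V) : Matrix V V ℝ :=
  fun u v => (G.dist u v : ℝ)

/-- The set of eigenvalues of a real matrix. -/
def eigSet {V : Type*} [Fintype V] (M : Matrix V V ℝ) : Set ℝ :=
  {μ | ∃ v : V → ℝ, v ≠ 0 ∧ M.mulVec v = μ • v}

/-- The number of odd components of a graph. -/
noncomputable def oddComp {V : Type*} (G : SimpleGraph V) : ℕ :=
  Nat.card {C : G.ConnectedComponent // Odd (Nat.card C.supp)}

/-- `F` is an even factor of `G`: a spanning subgraph with all degrees even and nonzero. -/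
def IsEvenFactor {V : Type*} [Fintype V] (G F : SimpleGraph V) : Prop := by
  classical exact F ≤ G ∧ ∀ v : V, Even (F.degree v) ∧ 0 < F.degree v

namespace SimpleGraph

variable {V : Type*} (G : SimpleGraph V)

/-- The distance capped at 2; unlike `SimpleGraph.dist`, distinct non-adjacent vertices count 2
even when no walk joins them. -/
def truncDist [DecidableEq V] [DecidableRel G.Adj] (u v : V) : ℕ :=
  if u = v then 0 else if G.Adj u v then 1 else 2

theorem dist_eq_truncDist [DecidableEq V] [DecidableRel G.Adj]
    (h : ∀ u v, u ≠ v → ¬G.Adj u v → ∃ w, G.Adj u w ∧ G.Adj w v) (u v : V) :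
    G.dist u v = G.truncDist u v := by
  unfold truncDist
  split_ifs with huv hadj
  · simp [huv]
  · exact dist_eq_one_iff_adj.mpr hadj
  · obtain ⟨w, huw, hwv⟩ := h u v huv hadj
    have : G.edist u v = 2 := edist_eq_two_iff.mpr ⟨huv, hadj, w, huw, hwv.symm⟩
    simp [dist, this]

theorem sum_truncDist_top [Fintype V] [DecidableEq V] :
    ∑ u : V, ∑ v : V, (⊤ : SimpleGraph V).truncDist u v =
      Fintype.card V * (Fintype.card V - 1) := by
  have (u : V) : ∑ v, (⊤ : SimpleGraph V).truncDist u v = Fintype.card V - 1 := by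
    have (v : V) : (⊤ : SimpleGraph V).truncDist u v = if u ≠ v then 1 else 0 := by
      by_cases h : u = v <;> simp [truncDist, h]
    simp only [this, Finset.sum_boole, Finset.filter_ne, Finset.mem_univ,
      Finset.card_erase_of_mem, Finset.card_univ, Nat.cast_id]
  simp [this]

theorem truncDist_bot [DecidableEq V] (u v : V) :
    (⊥ : SimpleGraph V).truncDist u v = 2 * (⊤ : SimpleGraph V).truncDist u v := by
  by_cases h : u = v <;> simp [truncDist, h]

theorem sum_truncDist_bot [Fintype V] [DecidableEq V] :
    ∑ u : V, ∑ v : V, (⊥ : SimpleGraph V).truncDist u v =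
      2 * (Fintype.card V * (Fintype.card V - 1)) := by
  simp only [truncDist_bot, ← Finset.mul_sum, sum_truncDist_top]

end SimpleGraph

section JoinAndSum

open SimpleGraph

variable {α β : Type*} (G : SimpleGraph α) (H : SimpleGraph β)

@[simp] theorem gJoin_adj_inl_inl {a b : α} :
    (gJoin G H).Adj (.inl a) (.inl b) ↔ G.Adj a b := Iff.rfl

@[simp] theorem gJoin_adj_inr_inr {x y : β} :
    (gJoin G H).Adj (.inr x) (.inr y) ↔ H.Adj x y := Iff.rfl

@[simp] theorem gJoin_adj_inl_inr {a : α} {x : β} :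
    (gJoin G H).Adj (.inl a) (.inr x) := trivial

@[simp] theorem gJoin_adj_inr_inl {a : α} {x : β} :
    (gJoin G H).Adj (.inr x) (.inl a) := trivial

@[simp] theorem gSum_adj_inl_inl {a b : α} :
    (gSum G H).Adj (.inl a) (.inl b) ↔ G.Adj a b := Iff.rfl

@[simp] theorem gSum_adj_inr_inr {x y : β} :
    (gSum G H).Adj (.inr x) (.inr y) ↔ H.Adj x y := Iff.rfl

@[simp] theorem gSum_not_adj_inl_inr {a : α} {x : β} :
    ¬(gSum G H).Adj (.inl a) (.inr x) := id

@[simp] theorem gSum_not_adj_inr_inl {a : α} {x : β} :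
    ¬(gSum G H).Adj (.inr x) (.inl a) := id

instance [DecidableRel G.Adj] [DecidableRel H.Adj] : DecidableRel (gJoin G H).Adj
  | .inl _, .inl _ => inferInstanceAs (Decidable (G.Adj _ _))
  | .inr _, .inr _ => inferInstanceAs (Decidable (H.Adj _ _))
  | .inl _, .inr _ => inferInstanceAs (Decidable True)
  | .inr _, .inl _ => inferInstanceAs (Decidable True)

instance [DecidableRel G.Adj] [DecidableRel H.Adj] : DecidableRel (gSum G H).Adj
  | .inl _, .inl _ => inferInstanceAs (Decidable (G.Adj _ _))
  | .inr _, .inr _ => inferInstanceAs (Decidable (H.Adj _ _))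
  | .inl _, .inr _ => inferInstanceAs (Decidable False)
  | .inr _, .inl _ => inferInstanceAs (Decidable False)

theorem gJoin_dist_eq_truncDist [Nonempty α] [Nonempty β] [DecidableEq α] [DecidableEq β]
    [DecidableRel G.Adj] [DecidableRel H.Adj] (u v : α ⊕ β) :
    (gJoin G H).dist u v = (gJoin G H).truncDist u v := by
  refine dist_eq_truncDist _ (fun u v _ hnadj ↦ ?_) u v
  obtain ⟨a⟩ := ‹Nonempty α›
  obtain ⟨x⟩ := ‹Nonempty β›
  rcases u with _ | _ <;> rcases v with _ | _
  · exact ⟨.inr x, trivial, trivial⟩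
  · exact absurd trivial hnadj
  · exact absurd trivial hnadj
  · exact ⟨.inl a, trivial, trivial⟩

variable [Fintype α] [Fintype β] [DecidableEq α] [DecidableEq β]
  [DecidableRel G.Adj] [DecidableRel H.Adj]

theorem sum_truncDist_gJoin :
    ∑ u, ∑ v, (gJoin G H).truncDist u v =
      ∑ a, ∑ b, G.truncDist a b + ∑ x, ∑ y, H.truncDist x y
        + 2 * Fintype.card α * Fintype.card β := by
  simp only [truncDist, Fintype.sum_sum_type, Finset.sum_add_distrib, Sum.inl.injEq,
    Sum.inr.injEq, reduceCtorEq, ↓reduceIte, gJoin_adj_inl_inl, gJoin_adj_inr_inr,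
    gJoin_adj_inl_inr, gJoin_adj_inr_inl, Finset.sum_const, Finset.card_univ, smul_eq_mul]
  ring

theorem sum_truncDist_gSum :
    ∑ u, ∑ v, (gSum G H).truncDist u v =
      ∑ a, ∑ b, G.truncDist a b + ∑ x, ∑ y, H.truncDist x y
        + 4 * Fintype.card α * Fintype.card β := by
  simp only [truncDist, Fintype.sum_sum_type, Finset.sum_add_distrib, Sum.inl.injEq,
    Sum.inr.injEq, reduceCtorEq, ↓reduceIte, gSum_adj_inl_inl, gSum_adj_inr_inr,
    gSum_not_adj_inl_inr, gSum_not_adj_inr_inl, Finset.sum_const, Finset.card_univ, smul_eq_mul]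
  ring

theorem sum_dist_gJoin [Nonempty α] [Nonempty β] :
    ∑ u, ∑ v, (gJoin G H).dist u v =
      ∑ a, ∑ b, G.truncDist a b + ∑ x, ∑ y, H.truncDist x y
        + 2 * Fintype.card α * Fintype.card β := by
  simp only [gJoin_dist_eq_truncDist, sum_truncDist_gJoin]

end JoinAndSum

theorem two_wiener_gstar (n δ : ℕ) (hδ : 2 ≤ δ) (hn : 2 * δ ≤ n) :
    (∑ u, ∑ v, ((Gstar n δ).dist u v : ℝ))
      = (n : ℝ) ^ 2 + (2 * δ - 3) * n - 3 * (δ : ℝ) ^ 2 + 3 * δ := by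
  have : Nonempty (Fin δ) := ⟨⟨0, by omega⟩⟩
  simp only [← Nat.cast_sum, Gstar, sum_dist_gJoin, sum_truncDist_gSum,
    SimpleGraph.sum_truncDist_top, SimpleGraph.sum_truncDist_bot, Fintype.card_fin,
    Fintype.card_sum, Nat.add_sub_cancel]
  push_cast [Nat.sub_sub, Nat.cast_sub hn, Nat.cast_sub (by omega : 1 ≤ δ),
    Nat.cast_sub (by omega : 1 + 1 ≤ δ)]
  ring

theorem stmt_8 (n δ : ℕ) (hδ : 2 ≤ δ) (hn : 8 * (δ : ℝ) - 7 ≤ n) :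
    (∑ u, ∑ v, ((Gstar n δ).dist u v : ℝ))
      = (n : ℝ) ^ 2 + (2 * δ - 3) * n - 3 * (δ : ℝ) ^ 2 + 3 * δ ∧
    (∑ u, ∑ v, ((Gstar n δ).dist u v : ℝ)) / n ≥ (n : ℝ) + δ - 3 := by
  have hδR : (2 : ℝ) ≤ δ := by exact_mod_cast hδ
  have h2δ : 2 * δ ≤ n := by exact_mod_cast (by linarith : (2 * δ : ℝ) ≤ n)
  rw [two_wiener_gstar n δ hδ h2δ]
  refine ⟨rfl, ?_⟩
  rw [ge_iff_le, le_div_iff₀ (by linarith)]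
  have hslack : (0 : ℝ) ≤ δ * (n - 3 * δ + 3) := mul_nonneg (by linarith) (by linarith)
  linarith
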